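/- Recursive MLM energy condition: let N' < N (positive noise levels), L > 1, and E' > 0. If 1 + 2E'/N' ≥ (1 + N/(2E'))·(N/N')^L, then E' ≥ (N'/4)·((N/N')^L − 1)·(1 + √(1 + 4(N/N')^{L+1}/(1 − (N/N')^L)²)). Conversely, equality E' = (N'/4)·((N/N')^L − 1)·(1 + √(1 + 4(N/N')^{L+1}/((N/N')^L − 1)²)) satisfies the condition with equality. -/
import Mathlib


/-- Recursive MLM energy condition: the quadratic condition
`1 + 2E'/N' ≥ (1 + N/(2E'))·(N/N')^L` forces `E'` to be at least the positive root,
and the positive root satisfies the condition with equality. -/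
theorem stmt_8 (N N' L E' : ℝ) (hN' : 0 < N') (hNN : N' < N) (hL : 1 < L)
    (hE : 0 < E') :
    ((1 + N / (2 * E')) * (N / N') ^ L ≤ 1 + 2 * E' / N' →
      N' / 4 * ((N / N') ^ L - 1)
        * (1 + Real.sqrt (1 + 4 * (N / N') ^ (L + 1) / (1 - (N / N') ^ L) ^ 2)) ≤ E')
    ∧ (E' = N' / 4 * ((N / N') ^ L - 1)
        * (1 + Real.sqrt (1 + 4 * (N / N') ^ (L + 1) / ((N / N') ^ L - 1) ^ 2)) →
      1 + 2 * E' / N' = (1 + N / (2 * E')) * (N / N') ^ L) := by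
  have ha : (1:ℝ) < N / N' := (one_lt_div hN').mpr hNN
  have ha0 : (0:ℝ) < N / N' := lt_trans one_pos ha
  have hN : 0 < N := lt_trans hN' hNN
  have hr : 1 < (N / N') ^ L := by
    rw [Real.one_lt_rpow_iff_of_pos ha0]
    exact Or.inl ⟨ha, by linarith⟩
  set r := (N / N') ^ L with hrdef
  have hr1 : (0:ℝ) < r - 1 := by linarith
  have hs : (N / N') ^ (L + 1) = r * (N / N') := by
    rw [hrdef, Real.rpow_add ha0, Real.rpow_one]
  set D := N' ^ 2 * (r - 1) ^ 2 + 4 * r * N' * N with hDdef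
  have hD : 0 ≤ D := by positivity
  have hsqD : Real.sqrt D ^ 2 = D := Real.sq_sqrt hD
  have hsqDnn : 0 ≤ Real.sqrt D := Real.sqrt_nonneg D
  -- key identity
  have hid : N' / 4 * (r - 1) * (1 + Real.sqrt (1 + 4 * (N / N') ^ (L + 1) / (r - 1) ^ 2))
      = (N' * (r - 1) + Real.sqrt D) / 4 := by
    have h1 : 1 + 4 * (N / N') ^ (L + 1) / (r - 1) ^ 2 = D / (N' * (r - 1)) ^ 2 := by
      rw [hs, hDdef]
      field_simp
    rw [h1, Real.sqrt_div hD, Real.sqrt_sq (by positivity : (0:ℝ) ≤ N' * (r - 1))]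
    field_simp
  have hDlb : N' * (r - 1) ≤ Real.sqrt D := by
    nlinarith [hsqD, hsqDnn]
  constructor
  · intro h
    have hquad : 0 ≤ 4 * E' ^ 2 - 2 * E' * N' * (r - 1) - r * N' * N := by
      have h2 := mul_le_mul_of_nonneg_right h (by positivity : (0:ℝ) ≤ 2 * E' * N')
      have e1 : (1 + N / (2 * E')) * r * (2 * E' * N') = 2 * E' * N' * r + N * N' * r := by
        field_simp
      have e2 : (1 + 2 * E' / N') * (2 * E' * N') = 2 * E' * N' + 4 * E' ^ 2 := by
        field_simp; ring
      nlinarith [h2]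
    have hsq : D ≤ (4 * E' - N' * (r - 1)) ^ 2 := by nlinarith
    have key : Real.sqrt D ≤ 4 * E' - N' * (r - 1) := by
      by_contra hc
      push_neg at hc
      nlinarith [hsq, hsqD, hDlb, hE]
    have hone : (1 - r) ^ 2 = (r - 1) ^ 2 := by ring
    rw [hone, hid]
    linarith
  · intro heq
    rw [hid] at heq
    have h4 : (4 * E' - N' * (r - 1)) ^ 2 = D := by
      have : 4 * E' - N' * (r - 1) = Real.sqrt D := by linarith
      rw [this]; exact hsqD
    have hq : 4 * E' ^ 2 - 2 * E' * N' * (r - 1) - r * N' * N = 0 := by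
      linear_combination h4 / 4
    have hgoal : (1 + 2 * E' / N') - (1 + N / (2 * E')) * r
        = (4 * E' ^ 2 - 2 * E' * N' * (r - 1) - r * N' * N) / (2 * E' * N') := by
      field_simp
      ring
    rw [hq] at hgoal
    simp at hgoal
    linarith
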